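/- arXiv:1209.4171 — 2 statements merged into one kernel-verified Lean document; each statement's English description precedes it below -/
import Mathlib

section
/- Let n be a finite-dimensional real nilpotent Lie algebra with inner product, A a derivation of n, and à its orthogonal projection (in the trace inner product) onto the inner derivations. Then ⟨Aˢ, Aˢ⟩ ≥ (1/2)⟨Ã, Ã⟩, where Aˢ = (A + A′)/2, with equality if and only if A − à is a skew-symmetric derivation of n. -/
/-!
Put `B := A - Ã` and `Ã = ad X`. Both `B` and `Ã` are derivations, and for a derivation `D` of a
nilpotent Lie algebra `D ∘ ad X` is nilpotent, so `tr (B Ã) = tr (Ã Ã) = 0`; with the projection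
condition `tr (B Ã′) = 0` every cross term in `⟨Aˢ, Aˢ⟩ = ½ (tr (A A′) + tr (A A))` vanishes, and
`⟨Aˢ, Aˢ⟩ = ⟨Bˢ, Bˢ⟩ + ½ ⟨Ã, Ã⟩`. Equality thus holds iff `Bˢ = 0`, i.e. iff `B` is skew.
-/

open LinearMap LieModule

section Nilpotent

variable {R L : Type*} [CommRing R] [LieRing L] [LieAlgebra R L]

lemma map_mem_lowerCentralSeries_of_leibniz {D : L →ₗ[R] L}
    (hD : ∀ x y : L, D ⁅x, y⁆ = ⁅D x, y⁆ + ⁅x, D y⁆) (k : ℕ) {x : L}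
    (hx : x ∈ lowerCentralSeries R L L k) : D x ∈ lowerCentralSeries R L L k := by
  induction k generalizing x with
  | zero => simp
  | succ k ih =>
    suffices (lowerCentralSeries R L L (k + 1)).toSubmodule ≤
        (lowerCentralSeries R L L (k + 1)).toSubmodule.comap D from this hx
    rw [lowerCentralSeries_succ]
    refine (LieSubmodule.lieIdeal_oper_eq_linear_span' _ _).trans_le (Submodule.span_le.2 ?_)
    rintro _ ⟨y, -, z, hz, rfl⟩
    rw [SetLike.mem_coe, Submodule.mem_comap, hD]
    exact add_mem (LieSubmodule.lie_mem_lie (LieSubmodule.mem_top _) hz)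
      (LieSubmodule.lie_mem_lie (LieSubmodule.mem_top _) (ih hz))

/-- `D ∘ ad x` pushes the lower central series one step down, hence is nilpotent. -/
lemma trace_comp_ad_eq_zero_of_leibniz [IsReduced R] [LieRing.IsNilpotent L] {D : L →ₗ[R] L}
    (hD : ∀ x y : L, D ⁅x, y⁆ = ⁅D x, y⁆ + ⁅x, D y⁆) (x : L) :
    trace R L (D ∘ₗ (LieAlgebra.ad R L x : L →ₗ[R] L)) = 0 := by
  have hpow : ∀ k (y : L), ((D ∘ₗ (LieAlgebra.ad R L x : L →ₗ[R] L)) ^ k) y ∈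
      lowerCentralSeries R L L k := by
    intro k
    induction k with
    | zero => simp
    | succ k ih =>
      intro y
      rw [pow_succ', Module.End.mul_apply]
      refine map_mem_lowerCentralSeries_of_leibniz hD _ ?_
      rw [lowerCentralSeries_succ]
      exact LieSubmodule.lie_mem_lie (LieSubmodule.mem_top _) (ih y)
  obtain ⟨k, hk⟩ := LieModule.IsNilpotent.nilpotent R L L
  refine (isNilpotent_trace_of_isNilpotent ⟨k, LinearMap.ext fun y => ?_⟩).eq_zero
  simpa [hk] using hpow k y

end Nilpotent

namespace LinearMap

section RCLike

open scoped ComplexOrder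

variable {𝕜 E : Type*} [RCLike 𝕜] [NormedAddCommGroup E] [InnerProductSpace 𝕜 E]
  [FiniteDimensional 𝕜 E]

lemma trace_adjoint (f : E →ₗ[𝕜] E) : trace 𝕜 E (adjoint f) = star (trace 𝕜 E f) := by
  let b := stdOrthonormalBasis 𝕜 E
  rw [trace_eq_matrix_trace 𝕜 b.toBasis, trace_eq_matrix_trace 𝕜 b.toBasis, toMatrix_adjoint,
    Matrix.trace_conjTranspose]

lemma trace_comp_adjoint_self_eq_zero_iff (f : E →ₗ[𝕜] E) :
    trace 𝕜 E (f ∘ₗ adjoint f) = 0 ↔ f = 0 := by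
  let b := stdOrthonormalBasis 𝕜 E
  rw [trace_eq_matrix_trace 𝕜 b.toBasis, toMatrix_comp b.toBasis b.toBasis, toMatrix_adjoint,
    Matrix.trace_mul_conjTranspose_self_eq_zero_iff, EmbeddingLike.map_eq_zero_iff]

end RCLike

variable {E : Type*} [NormedAddCommGroup E] [InnerProductSpace ℝ E] [FiniteDimensional ℝ E]

lemma trace_symmPart_comp_adjoint (f : E →ₗ[ℝ] E) :
    trace ℝ E (((1 / 2 : ℝ) • (f + adjoint f)) ∘ₗ adjoint ((1 / 2 : ℝ) • (f + adjoint f))) =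
      (1 / 2 : ℝ) * (trace ℝ E (f ∘ₗ adjoint f) + trace ℝ E (f ∘ₗ f)) := by
  have h₁ : trace ℝ E (adjoint f ∘ₗ adjoint f) = trace ℝ E (f ∘ₗ f) := by
    rw [← adjoint_comp, trace_adjoint, star_trivial]
  have h₂ : trace ℝ E (adjoint f ∘ₗ f) = trace ℝ E (f ∘ₗ adjoint f) := trace_comp_comm' _ _
  simp only [map_smul, map_add, adjoint_adjoint, smul_comp, comp_smul, add_comp, comp_add,
    smul_eq_mul, h₁, h₂]
  ring

lemma trace_symmPart_comp_adjoint_add {f g : E →ₗ[ℝ] E}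
    (hfg' : trace ℝ E (f ∘ₗ adjoint g) = 0) (hfg : trace ℝ E (f ∘ₗ g) = 0)
    (hgg : trace ℝ E (g ∘ₗ g) = 0) :
    trace ℝ E (((1 / 2 : ℝ) • (f + g + adjoint (f + g))) ∘ₗ
        adjoint ((1 / 2 : ℝ) • (f + g + adjoint (f + g)))) =
      trace ℝ E (((1 / 2 : ℝ) • (f + adjoint f)) ∘ₗ adjoint ((1 / 2 : ℝ) • (f + adjoint f))) +
        (1 / 2 : ℝ) * trace ℝ E (g ∘ₗ adjoint g) := by
  have hgf' : trace ℝ E (g ∘ₗ adjoint f) = 0 := by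
    rw [← adjoint_adjoint g, ← adjoint_comp, trace_adjoint, hfg', star_zero]
  have hgf : trace ℝ E (g ∘ₗ f) = 0 := by rw [trace_comp_comm', hfg]
  rw [trace_symmPart_comp_adjoint, trace_symmPart_comp_adjoint]
  simp only [map_add, add_comp, comp_add, hfg', hgf', hfg, hgf, hgg]
  ring

end LinearMap

abbrev LinearMap.BilinForm.toInnerProductSpaceCore {V : Type*} [AddCommGroup V] [Module ℝ V]
    (inn : V →ₗ[ℝ] V →ₗ[ℝ] ℝ) (hsymm : ∀ x y : V, inn x y = inn y x)
    (hposdef : ∀ x : V, x ≠ 0 → 0 < inn x x) : InnerProductSpace.Core ℝ V where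
  inner x y := inn x y
  conj_inner_symm x y := hsymm y x
  re_inner_nonneg x := by
    rcases eq_or_ne x 0 with rfl | hx
    · simp
    · exact (hposdef x hx).le
  add_left x y z := by simp
  smul_left x y r := by simp
  definite x hx := by
    by_contra h
    exact (hposdef x h).ne' hx

/-- For a derivation `A` of a nilpotent metric Lie algebra with orthogonal projection `Atil`
onto the inner derivations, `⟨Aˢ, Aˢ⟩ ≥ (1/2)⟨Atil, Atil⟩`, with equality iff `A - Atil` is a
skew-symmetric derivation. -/
theorem stmt_8 {n : Type*} [LieRing n] [LieAlgebra ℝ n] [FiniteDimensional ℝ n]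
    [LieRing.IsNilpotent n]
    (inn : n →ₗ[ℝ] n →ₗ[ℝ] ℝ)
    (hsymm : ∀ x y : n, inn x y = inn y x)
    (hposdef : ∀ x : n, x ≠ 0 → 0 < inn x x)
    -- `adj C` is the adjoint of `C` with respect to the inner product `inn`:
    (adj : (n →ₗ[ℝ] n) → (n →ₗ[ℝ] n))
    (hadj : ∀ (C : n →ₗ[ℝ] n) (x y : n), inn (C x) y = inn x (adj C y))
    (A Atil : n →ₗ[ℝ] n)
    (hA : ∀ x y : n, A ⁅x, y⁆ = ⁅A x, y⁆ + ⁅x, A y⁆)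
    -- `Atil` is an inner derivation:
    (hAtilinner : ∃ X : n, Atil = (LieAlgebra.ad ℝ n X : n →ₗ[ℝ] n))
    -- `A - Atil` is orthogonal to all inner derivations w.r.t. the trace inner product:
    (hproj : ∀ X : n, LinearMap.trace ℝ n
      ((A - Atil) ∘ₗ adj (LieAlgebra.ad ℝ n X : n →ₗ[ℝ] n)) = 0) :
    (1 / 2 : ℝ) * LinearMap.trace ℝ n (Atil ∘ₗ adj Atil) ≤
      LinearMap.trace ℝ n
        (((1 / 2 : ℝ) • (A + adj A)) ∘ₗ adj ((1 / 2 : ℝ) • (A + adj A))) ∧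
    (LinearMap.trace ℝ n
        (((1 / 2 : ℝ) • (A + adj A)) ∘ₗ adj ((1 / 2 : ℝ) • (A + adj A))) =
      (1 / 2 : ℝ) * LinearMap.trace ℝ n (Atil ∘ₗ adj Atil) ↔
      ((∀ x y : n, (A - Atil) ⁅x, y⁆ = ⁅(A - Atil) x, y⁆ + ⁅x, (A - Atil) y⁆) ∧
        adj (A - Atil) = -(A - Atil))) := by
  obtain ⟨X, rfl⟩ := hAtilinner
  have had : ∀ x y : n, LieAlgebra.ad ℝ n X ⁅x, y⁆ =
      ⁅LieAlgebra.ad ℝ n X x, y⁆ + ⁅x, LieAlgebra.ad ℝ n X y⁆ := fun x y => leibniz_lie X x y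
  have hB : ∀ x y : n, (A - LieAlgebra.ad ℝ n X) ⁅x, y⁆ =
      ⁅(A - LieAlgebra.ad ℝ n X) x, y⁆ + ⁅x, (A - LieAlgebra.ad ℝ n X) y⁆ := fun x y => by
    simp only [LinearMap.sub_apply, hA, had, sub_lie, lie_sub]
    abel
  let core := LinearMap.BilinForm.toInnerProductSpaceCore inn hsymm hposdef
  let : NormedAddCommGroup n := core.toNormedAddCommGroup
  let : InnerProductSpace ℝ n := .ofCore core.toCore
  have hadj_eq : ∀ C, adj C = adjoint C := fun C =>
    (eq_adjoint_iff _ _).2 fun x y => by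
      change inn (adj C x) y = inn x (C y)
      rw [hsymm, ← hadj, hsymm]
  simp only [hadj_eq] at hproj ⊢
  have hsplit := trace_symmPart_comp_adjoint_add (hproj X)
    (trace_comp_ad_eq_zero_of_leibniz hB X) (trace_comp_ad_eq_zero_of_leibniz had X)
  rw [sub_add_cancel] at hsplit
  rw [hsplit, add_eq_right]
  refine ⟨le_add_of_nonneg_left (isPositive_self_comp_adjoint _).trace_nonneg, ?_⟩
  rw [trace_comp_adjoint_self_eq_zero_iff, smul_eq_zero, or_iff_right (by norm_num),
    add_eq_zero_iff_eq_neg', and_iff_right hB]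
end

section
/- Let à be a real symmetric n×n matrix and A the (n−1)×(n−1) matrix obtained from à by deleting the last row and last column. If λ₁ ≤ ... ≤ λ_{n−1} are the eigenvalues of A and λ̃₁ ≤ ... ≤ λ̃_n those of Ã, then λ̃₁ ≤ λ₁ ≤ λ̃₂ ≤ λ₂ ≤ ... ≤ λ_{n−1} ≤ λ̃_n (Cauchy interlacing). -/
/-!
Min–max argument. Let `u j` be orthonormal eigenvectors of `Ã` for `μ j`, and `v j` orthonormal
eigenvectors of `A` for `λ j`, extended by a zero last coordinate. Since `A` is the compression of
`Ã`, the extended `v j` are orthonormal in `ℝⁿ⁺¹` and diagonalize the quadratic form of `Ã` with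
the values `λ j`, although they are not eigenvectors of `Ã`. On `span {u j | j ≥ i}` the quadratic
form of `Ã` is at least `μ i ‖x‖²`, on `span {v j | j ≤ i}` at most `λ i ‖x‖²`; the dimensions add up
to `n + 2 > n + 1`, so the two spans share a nonzero vector and `μ i ≤ λ i`. The spans of
`{v j | j ≥ i}` and `{u j | j ≤ i + 1}` give `λ i ≤ μ (i + 1)` in the same way.
-/

open Finset Module Submodule
open scoped RealInnerProductSpace

section RayleighBounds

variable {E : Type*} [NormedAddCommGroup E] [InnerProductSpace ℝ E]
  {ι : Type*} [Fintype ι] {T : E →ₗ[ℝ] E} {w : ι → E} {ev : ι → ℝ}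

lemma Orthonormal.inner_sum_smul_map_sum_smul (hw : Orthonormal ℝ w)
    (hT : ∀ i j, ⟪w i, T (w j)⟫ = ev j * ⟪w i, w j⟫) (c : ι → ℝ) :
    ⟪∑ i, c i • w i, T (∑ i, c i • w i)⟫ = ∑ i, ev i * c i ^ 2 := by
  classical
  simp only [map_sum, map_smul, sum_inner, inner_sum, real_inner_smul_left, real_inner_smul_right,
    hT, orthonormal_iff_ite.1 hw, mul_ite, mul_one, mul_zero, sum_ite_eq', mem_univ,
    if_true]
  exact sum_congr rfl fun i _ => by ring

lemma Orthonormal.mul_norm_sq_le_inner_map_self (hw : Orthonormal ℝ w)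
    (hT : ∀ i j, ⟪w i, T (w j)⟫ = ev j * ⟪w i, w j⟫) {a : ℝ} (ha : ∀ i, a ≤ ev i) {x : E}
    (hx : x ∈ span ℝ (Set.range w)) : a * ‖x‖ ^ 2 ≤ ⟪x, T x⟫ := by
  obtain ⟨c, rfl⟩ := (mem_span_range_iff_exists_fun ℝ).1 hx
  rw [hw.inner_sum_smul_map_sum_smul hT, ← real_inner_self_eq_norm_sq, hw.inner_sum, mul_sum]
  exact sum_le_sum fun i _ => by
    simpa [sq, mul_assoc] using mul_le_mul_of_nonneg_right (ha i) (mul_self_nonneg (c i))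

lemma Orthonormal.inner_map_self_le_mul_norm_sq (hw : Orthonormal ℝ w)
    (hT : ∀ i j, ⟪w i, T (w j)⟫ = ev j * ⟪w i, w j⟫) {b : ℝ} (hb : ∀ i, ev i ≤ b) {x : E}
    (hx : x ∈ span ℝ (Set.range w)) : ⟪x, T x⟫ ≤ b * ‖x‖ ^ 2 := by
  obtain ⟨c, rfl⟩ := (mem_span_range_iff_exists_fun ℝ).1 hx
  rw [hw.inner_sum_smul_map_sum_smul hT, ← real_inner_self_eq_norm_sq, hw.inner_sum, mul_sum]
  exact sum_le_sum fun i _ => by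
    simpa [sq, mul_assoc] using mul_le_mul_of_nonneg_right (hb i) (mul_self_nonneg (c i))

end RayleighBounds

lemma Submodule.exists_mem_inf_ne_zero_of_finrank_lt {K V : Type*} [DivisionRing K]
    [AddCommGroup V] [Module K V] [FiniteDimensional K V] {P Q : Submodule K V}
    (h : finrank K V < finrank K P + finrank K Q) : ∃ x ∈ P ⊓ Q, x ≠ 0 := by
  refine (Submodule.ne_bot_iff _).1 fun hbot => h.not_ge ?_
  rw [← finrank_sup_add_finrank_inf_eq, hbot, finrank_bot, add_zero]
  exact finrank_le _

lemma le_of_finrank_lt_add_finrank {E : Type*} [NormedAddCommGroup E] [NormedSpace ℝ E]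
    [FiniteDimensional ℝ E] {q : E → ℝ} {P Q : Submodule ℝ E} {a b : ℝ}
    (hPQ : finrank ℝ E < finrank ℝ P + finrank ℝ Q) (hP : ∀ x ∈ P, a * ‖x‖ ^ 2 ≤ q x)
    (hQ : ∀ x ∈ Q, q x ≤ b * ‖x‖ ^ 2) : a ≤ b := by
  obtain ⟨x, ⟨hxP, hxQ⟩, hx⟩ := exists_mem_inf_ne_zero_of_finrank_lt hPQ
  exact le_of_mul_le_mul_right ((hP x hxP).trans (hQ x hxQ)) (by positivity)

lemma Orthonormal.le_of_finrank_lt_card_add_card {E : Type*} [NormedAddCommGroup E]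
    [InnerProductSpace ℝ E] [FiniteDimensional ℝ E] {T : E →ₗ[ℝ] E} {ι κ : Type*}
    {u : ι → E} {w : κ → E} {ev₁ : ι → ℝ} {ev₂ : κ → ℝ} (hu : Orthonormal ℝ u)
    (hTu : ∀ i j, ⟪u i, T (u j)⟫ = ev₁ j * ⟪u i, u j⟫) (hw : Orthonormal ℝ w)
    (hTw : ∀ i j, ⟪w i, T (w j)⟫ = ev₂ j * ⟪w i, w j⟫) {s : Finset ι} {t : Finset κ}
    (hst : finrank ℝ E < #s + #t) {a b : ℝ} (ha : ∀ i ∈ s, a ≤ ev₁ i)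
    (hb : ∀ j ∈ t, ev₂ j ≤ b) : a ≤ b := by
  have hu' := hu.comp _ (Subtype.val_injective (p := (· ∈ s)))
  have hw' := hw.comp _ (Subtype.val_injective (p := (· ∈ t)))
  refine le_of_finrank_lt_add_finrank (q := fun x => ⟪x, T x⟫)
    (P := span ℝ (Set.range (u ∘ (↑) : s → E))) (Q := span ℝ (Set.range (w ∘ (↑) : t → E))) ?_
    (fun x hx => hu'.mul_norm_sq_le_inner_map_self (fun i j => hTu i j) (fun i => ha i i.2) hx)
    (fun x hx => hw'.inner_map_self_le_mul_norm_sq (fun i j => hTw i j) (fun j => hb j j.2) hx)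
  rwa [finrank_span_eq_card hu'.linearIndependent, finrank_span_eq_card hw'.linearIndependent,
    Fintype.card_coe, Fintype.card_coe]

lemma Matrix.IsHermitian.exists_orthonormal_eigenvectors {ι : Type*} [Fintype ι] [DecidableEq ι]
    {M : Matrix ι ι ℝ} (hM : M.IsHermitian) {mu : ι → ℝ}
    (hmu : ∃ σ : Equiv.Perm ι, mu = hM.eigenvalues ∘ σ) :
    ∃ w : ι → EuclideanSpace ℝ ι, Orthonormal ℝ w ∧ ∀ j, toEuclideanLin M (w j) = mu j • w j := by
  obtain ⟨σ, rfl⟩ := hmu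
  refine ⟨fun j => hM.eigenvectorBasis (σ j), hM.eigenvectorBasis.orthonormal.comp _ σ.injective,
    fun j => WithLp.ofLp_injective 2 ?_⟩
  simpa using hM.mulVec_eigenvectorBasis (σ j)

namespace EuclideanSpace

variable {𝕜 : Type*} [RCLike 𝕜] {n : ℕ}

noncomputable def snocZero (y : EuclideanSpace 𝕜 (Fin n)) : EuclideanSpace 𝕜 (Fin (n + 1)) :=
  WithLp.toLp 2 (Fin.snoc (α := fun _ => 𝕜) y.ofLp 0)

lemma inner_snocZero (x y : EuclideanSpace 𝕜 (Fin n)) :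
    inner 𝕜 (snocZero x) (snocZero y) = inner 𝕜 x y := by
  simp [snocZero, inner_eq_star_dotProduct, dotProduct, Fin.sum_univ_castSucc]

lemma inner_snocZero_toEuclideanLin (M : Matrix (Fin (n + 1)) (Fin (n + 1)) 𝕜)
    (x y : EuclideanSpace 𝕜 (Fin n)) :
    inner 𝕜 (snocZero x) (Matrix.toEuclideanLin M (snocZero y)) =
      inner 𝕜 x (Matrix.toEuclideanLin (M.submatrix Fin.castSucc Fin.castSucc) y) := by
  simp [snocZero, inner_eq_star_dotProduct, dotProduct, Matrix.mulVec, Fin.sum_univ_castSucc]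

end EuclideanSpace

open EuclideanSpace

/-- Cauchy interlacing: the eigenvalues of a real symmetric matrix and those of the principal
submatrix obtained by deleting the last row and column interlace. -/
theorem stmt_10 {n : ℕ} (Atil : Matrix (Fin (n + 1)) (Fin (n + 1)) ℝ)
    (hAtil : Atil.IsHermitian)
    (A : Matrix (Fin n) (Fin n) ℝ)
    (hAdef : A = Atil.submatrix Fin.castSucc Fin.castSucc)
    (hA : A.IsHermitian)
    (lam : Fin n → ℝ) (mu : Fin (n + 1) → ℝ)
    (hlam_mono : Monotone lam) (hmu_mono : Monotone mu)
    -- `lam` and `mu` are the eigenvalues (with multiplicity) arranged in increasing order: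
    (hlam : ∃ σ : Equiv.Perm (Fin n), lam = hA.eigenvalues ∘ σ)
    (hmu : ∃ σ : Equiv.Perm (Fin (n + 1)), mu = hAtil.eigenvalues ∘ σ) :
    ∀ i : Fin n, mu i.castSucc ≤ lam i ∧ lam i ≤ mu i.succ := by
  obtain ⟨u, hu, hAtil_u⟩ := hAtil.exists_orthonormal_eigenvectors hmu
  obtain ⟨v, hv, hA_v⟩ := hA.exists_orthonormal_eigenvectors hlam
  set T := Matrix.toEuclideanLin Atil
  have hTu : ∀ i j, ⟪u i, T (u j)⟫ = mu j * ⟪u i, u j⟫ := fun i j => by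
    rw [hAtil_u, real_inner_smul_right]
  have hv' : Orthonormal ℝ (snocZero ∘ v) := by
    simpa [orthonormal_iff_ite, inner_snocZero] using hv
  have hTv : ∀ i j, ⟪snocZero (v i), T (snocZero (v j))⟫ =
      lam j * ⟪snocZero (v i), snocZero (v j)⟫ := fun i j => by
    rw [inner_snocZero_toEuclideanLin, ← hAdef, hA_v, real_inner_smul_right, inner_snocZero]
  intro i
  constructor
  · refine hu.le_of_finrank_lt_card_add_card hTu hv' hTv (s := Ici i.castSucc) (t := Iic i) ?_
      (fun j hj => hmu_mono (mem_Ici.1 hj)) (fun j hj => hlam_mono (mem_Iic.1 hj))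
    simp only [finrank_euclideanSpace_fin, Fin.card_Ici, Fin.card_Iic, Fin.val_castSucc]
    omega
  · refine hv'.le_of_finrank_lt_card_add_card hTv hu hTu (s := Ici i) (t := Iic i.succ) ?_
      (fun j hj => hlam_mono (mem_Ici.1 hj)) (fun j hj => hmu_mono (mem_Iic.1 hj))
    simp only [finrank_euclideanSpace_fin, Fin.card_Ici, Fin.card_Iic, Fin.val_succ]
    omega
end
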